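/- arXiv:math/9410215 — 4 statements merged into one kernel-verified Lean document; each statement's English description precedes it below -/
import Mathlib

section
/- Any set of primitive vectors in Z^2 (slopes on a torus, i.e. primitive classes up to sign), pairwise non-parallel up to sign, such that any two distinct elements r1 = (a,b), r2 = (c,d) satisfy |ad - bc| ≤ 5, has cardinality at most 8. -/
/-- A vector in ℤ² is primitive if its coordinates are coprime. -/
def Primitive (v : ℤ × ℤ) : Prop := Int.gcd v.1 v.2 = 1

/-- The distance between two slopes: absolute value of the determinant. -/
def slopeDist (v w : ℤ × ℤ) : ℤ := |v.1 * w.2 - v.2 * w.1|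

/-- Two vectors represent the same slope iff they agree up to sign. -/
def SameSlope (v w : ℤ × ℤ) : Prop := v = w ∨ v = -w
private lemma three_of {α : Type*} [DecidableEq α] {s : Finset α} (h : 3 ≤ s.card) :
    ∃ a ∈ s, ∃ b ∈ s, ∃ c ∈ s, a ≠ b ∧ a ≠ c ∧ b ≠ c := by
  obtain ⟨t, hts, htc⟩ := Finset.exists_subset_card_eq h
  obtain ⟨a, b, c, hab, hac, hbc, rfl⟩ := Finset.card_eq_three.mp htc
  exact ⟨a, hts (by simp), b, hts (by simp), c, hts (by simp), hab, hac, hbc⟩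

private lemma chainD7 (a p c r : ℤ) (ha : a % 2 = 1) (hp : p % 3 = 1) (hc : c % 2 = 1)
    (hr : r % 5 ≠ 0) (hr2 : r % 5 ≠ 4)
    (D1 : |3*a - 2*p| ≤ 5) (D2 : |3*a - 2*p - 2| ≤ 5)
    (D3 : |4*a - 2*c| ≤ 5)
    (D4 : |5*p - 3*r| ≤ 5) (D5 : |5*p - 3*r - 3| ≤ 5)
    (D6 : |5*p - 3*r + 5| ≤ 5) (D7 : |5*p - 3*r + 2| ≤ 5)
    (D8 : |5*c - 4*r| ≤ 5) (D9 : |5*c - 4*r - 4| ≤ 5) : False := by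
  rw [abs_le] at D1 D2 D3 D4 D5 D6 D7 D8 D9
  have hP : 3*a - 2*p = 1 := by omega
  have ht : 5*p - 3*r = -1 := by omega
  have hr' : 5*a - 2*r = 1 := by omega
  omega

private lemma key (U : Finset (ℤ × ℤ))
    (hy : ∀ u ∈ U, 1 ≤ u.2 ∧ u.2 ≤ 5)
    (hg : ∀ u ∈ U, Int.gcd u.1 u.2 = 1)
    (hd : ∀ u ∈ U, ∀ w ∈ U, u ≠ w → |u.1 * w.2 - u.2 * w.1| ≤ 5) :
    U.card ≤ 7 := by
  classical
  have hdd : ∀ u ∈ U, ∀ w ∈ U, u ≠ w →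
      -5 ≤ u.1 * w.2 - u.2 * w.1 ∧ u.1 * w.2 - u.2 * w.1 ≤ 5 :=
    fun u hu w hw h => abs_le.mp (hd u hu w hw h)
  have hmod : ∀ u ∈ U, ∀ k : ℤ, 2 ≤ k → k ∣ u.2 → ¬ k ∣ u.1 := by
    intro u hu k hk hdvd hdvd1
    have h1 : k ∣ ((Int.gcd u.1 u.2 : ℕ) : ℤ) := Int.dvd_coe_gcd hdvd1 hdvd
    rw [hg u hu] at h1
    have := Int.le_of_dvd one_pos h1
    omega
  set F1 := U.filter (fun u => u.2 = 1) with hF1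
  set F2 := U.filter (fun u => u.2 = 2) with hF2
  set F3 := U.filter (fun u => u.2 = 3) with hF3
  set F4 := U.filter (fun u => u.2 = 4) with hF4
  set F5 := U.filter (fun u => u.2 = 5) with hF5
  have hsub : U ⊆ F1 ∪ F2 ∪ F3 ∪ F4 ∪ F5 := by
    intro u hu
    have h1 := hy u hu
    simp only [hF1, hF2, hF3, hF4, hF5, Finset.mem_union, Finset.mem_filter]
    have : u.2 = 1 ∨ u.2 = 2 ∨ u.2 = 3 ∨ u.2 = 4 ∨ u.2 = 5 := by omega
    tauto
  have hcount : U.card ≤ F1.card + F2.card + F3.card + F4.card + F5.card := by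
    calc U.card ≤ (F1 ∪ F2 ∪ F3 ∪ F4 ∪ F5).card := Finset.card_le_card hsub
      _ ≤ (F1 ∪ F2 ∪ F3 ∪ F4).card + F5.card := Finset.card_union_le _ _
      _ ≤ ((F1 ∪ F2 ∪ F3).card + F4.card) + F5.card := by
          gcongr
          exact Finset.card_union_le _ _
      _ ≤ (((F1 ∪ F2).card + F3.card) + F4.card) + F5.card := by
          gcongr
          exact Finset.card_union_le _ _
      _ ≤ F1.card + F2.card + F3.card + F4.card + F5.card := by
          have := Finset.card_union_le F1 F2
          omega
  -- membership unpacking helpers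
  have hmem1 : ∀ u ∈ F1, u ∈ U ∧ u.2 = 1 := fun u hu => Finset.mem_filter.mp hu
  have hmem2 : ∀ u ∈ F2, u ∈ U ∧ u.2 = 2 := fun u hu => Finset.mem_filter.mp hu
  have hmem3 : ∀ u ∈ F3, u ∈ U ∧ u.2 = 3 := fun u hu => Finset.mem_filter.mp hu
  have hmem4 : ∀ u ∈ F4, u ∈ U ∧ u.2 = 4 := fun u hu => Finset.mem_filter.mp hu
  have hmem5 : ∀ u ∈ F5, u ∈ U ∧ u.2 = 5 := fun u hu => Finset.mem_filter.mp hu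
  -- min/max structure of F1
  have hXfact : 2 ≤ F1.card → ∃ m M : ℤ, (m, (1:ℤ)) ∈ U ∧ (M, (1:ℤ)) ∈ U ∧ m < M ∧
      M - m ≤ 5 ∧ (F1.card : ℤ) ≤ M - m + 1 := by
    intro h2
    have hinj : Set.InjOn Prod.fst (F1 : Set (ℤ × ℤ)) := by
      intro a ha b hb hab
      have ha' := hmem1 a ha
      have hb' := hmem1 b hb
      exact Prod.ext_iff.mpr ⟨hab, by omega⟩
    set X := F1.image Prod.fst with hX
    have hXcard : X.card = F1.card := Finset.card_image_of_injOn hinj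
    have hXne : X.Nonempty := Finset.card_pos.mp (by omega)
    have hX2 : 1 < X.card := by omega
    set m := X.min' hXne with hm
    set M := X.max' hXne with hM
    have hmX : m ∈ X := X.min'_mem hXne
    have hMX : M ∈ X := X.max'_mem hXne
    have hmM : m < M := Finset.min'_lt_max'_of_card X hX2
    obtain ⟨vm, hvm, hvm1⟩ := Finset.mem_image.mp hmX
    obtain ⟨vM, hvM, hvM1⟩ := Finset.mem_image.mp hMX
    have hvm' := hmem1 vm hvm
    have hvM' := hmem1 vM hvM
    have hvmeq : vm = (m, (1:ℤ)) := Prod.ext_iff.mpr ⟨hvm1, hvm'.2⟩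
    have hvMeq : vM = (M, (1:ℤ)) := Prod.ext_iff.mpr ⟨hvM1, hvM'.2⟩
    have hmU : (m, (1:ℤ)) ∈ U := hvmeq ▸ hvm'.1
    have hMU : (M, (1:ℤ)) ∈ U := hvMeq ▸ hvM'.1
    have hne : (m, (1:ℤ)) ≠ (M, (1:ℤ)) := by
      simp only [ne_eq, Prod.mk.injEq]
      omega
    obtain ⟨L, R⟩ := hdd _ hmU _ hMU hne
    simp only at L R
    have hsubI : X ⊆ Finset.Icc m M := by
      intro z hz
      exact Finset.mem_Icc.mpr ⟨X.min'_le z hz, X.le_max' z hz⟩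
    have hcard : X.card ≤ (Finset.Icc m M).card := Finset.card_le_card hsubI
    rw [Int.card_Icc] at hcard
    refine ⟨m, M, hmU, hMU, hmM, by omega, by omega⟩
  -- caps for classes 2..5
  have cap2 : F2.card ≤ 2 := by
    by_contra hc
    obtain ⟨a, ha, b, hb, c, hc', hab, hac, hbc⟩ := three_of (s := F2) (by omega)
    obtain ⟨haU, ha2⟩ := hmem2 a ha
    obtain ⟨hbU, hb2⟩ := hmem2 b hb
    obtain ⟨hcU, hc2⟩ := hmem2 c hc'
    have o1 : ¬ (2:ℤ) ∣ a.1 := hmod a haU 2 (by norm_num) (by rw [ha2])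
    have o2 : ¬ (2:ℤ) ∣ b.1 := hmod b hbU 2 (by norm_num) (by rw [hb2])
    have o3 : ¬ (2:ℤ) ∣ c.1 := hmod c hcU 2 (by norm_num) (by rw [hc2])
    have d1 := hdd a haU b hbU hab
    have d2 := hdd a haU c hcU hac
    have d3 := hdd b hbU c hcU hbc
    rw [ha2, hb2] at d1
    rw [ha2, hc2] at d2
    rw [hb2, hc2] at d3
    have e1 : a.1 ≠ b.1 := fun h => hab (Prod.ext_iff.mpr ⟨h, by omega⟩)
    have e2 : a.1 ≠ c.1 := fun h => hac (Prod.ext_iff.mpr ⟨h, by omega⟩)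
    have e3 : b.1 ≠ c.1 := fun h => hbc (Prod.ext_iff.mpr ⟨h, by omega⟩)
    omega
  have cap3 : F3.card ≤ 2 := by
    by_contra hc
    obtain ⟨a, ha, b, hb, c, hc', hab, hac, hbc⟩ := three_of (s := F3) (by omega)
    obtain ⟨haU, ha2⟩ := hmem3 a ha
    obtain ⟨hbU, hb2⟩ := hmem3 b hb
    obtain ⟨hcU, hc2⟩ := hmem3 c hc'
    have d1 := hdd a haU b hbU hab
    have d2 := hdd a haU c hcU hac
    have d3 := hdd b hbU c hcU hbc
    rw [ha2, hb2] at d1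
    rw [ha2, hc2] at d2
    rw [hb2, hc2] at d3
    have e1 : a.1 ≠ b.1 := fun h => hab (Prod.ext_iff.mpr ⟨h, by omega⟩)
    have e2 : a.1 ≠ c.1 := fun h => hac (Prod.ext_iff.mpr ⟨h, by omega⟩)
    have e3 : b.1 ≠ c.1 := fun h => hbc (Prod.ext_iff.mpr ⟨h, by omega⟩)
    omega
  have cap4 : F4.card ≤ 1 := by
    by_contra hc
    obtain ⟨a, ha, b, hb, hab⟩ := Finset.one_lt_card.mp (by omega : 1 < F4.card)
    obtain ⟨haU, ha2⟩ := hmem4 a ha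
    obtain ⟨hbU, hb2⟩ := hmem4 b hb
    have o1 : ¬ (2:ℤ) ∣ a.1 := hmod a haU 2 (by norm_num) (by rw [ha2]; norm_num)
    have o2 : ¬ (2:ℤ) ∣ b.1 := hmod b hbU 2 (by norm_num) (by rw [hb2]; norm_num)
    have d1 := hdd a haU b hbU hab
    rw [ha2, hb2] at d1
    have e1 : a.1 ≠ b.1 := fun h => hab (Prod.ext_iff.mpr ⟨h, by omega⟩)
    omega
  have cap5 : F5.card ≤ 2 := by
    by_contra hc
    obtain ⟨a, ha, b, hb, c, hc', hab, hac, hbc⟩ := three_of (s := F5) (by omega)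
    obtain ⟨haU, ha2⟩ := hmem5 a ha
    obtain ⟨hbU, hb2⟩ := hmem5 b hb
    obtain ⟨hcU, hc2⟩ := hmem5 c hc'
    have d1 := hdd a haU b hbU hab
    have d2 := hdd a haU c hcU hac
    have d3 := hdd b hbU c hcU hbc
    rw [ha2, hb2] at d1
    rw [ha2, hc2] at d2
    rw [hb2, hc2] at d3
    have e1 : a.1 ≠ b.1 := fun h => hab (Prod.ext_iff.mpr ⟨h, by omega⟩)
    have e2 : a.1 ≠ c.1 := fun h => hac (Prod.ext_iff.mpr ⟨h, by omega⟩)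
    have e3 : b.1 ≠ c.1 := fun h => hbc (Prod.ext_iff.mpr ⟨h, by omega⟩)
    omega
  have cap1 : F1.card ≤ 6 := by
    by_cases h2 : 2 ≤ F1.card
    · obtain ⟨m, M, _, _, _, h5, hb⟩ := hXfact h2
      omega
    · omega
  -- D facts
  have hD1a : F2.card ≤ 1 ∨ F4.card = 0 := by
    by_contra hc
    push_neg at hc
    obtain ⟨h2, h4⟩ := hc
    obtain ⟨a, ha, b, hb, hab⟩ := Finset.one_lt_card.mp (by omega : 1 < F2.card)
    obtain ⟨c, hcF⟩ := Finset.card_pos.mp (by omega : 0 < F4.card)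
    obtain ⟨haU, ha2⟩ := hmem2 a ha
    obtain ⟨hbU, hb2⟩ := hmem2 b hb
    obtain ⟨hcU, hc2⟩ := hmem4 c hcF
    have o1 : ¬ (2:ℤ) ∣ a.1 := hmod a haU 2 (by norm_num) (by rw [ha2])
    have o2 : ¬ (2:ℤ) ∣ b.1 := hmod b hbU 2 (by norm_num) (by rw [hb2])
    have o3 : ¬ (2:ℤ) ∣ c.1 := hmod c hcU 2 (by norm_num) (by rw [hc2]; norm_num)
    have nac : a ≠ c := fun h => by rw [h] at ha2; omega
    have nbc : b ≠ c := fun h => by rw [h] at hb2; omega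
    have d1 := hdd a haU b hbU hab
    have d2 := hdd a haU c hcU nac
    have d3 := hdd b hbU c hcU nbc
    rw [ha2, hb2] at d1
    rw [ha2, hc2] at d2
    rw [hb2, hc2] at d3
    have e1 : a.1 ≠ b.1 := fun h => hab (Prod.ext_iff.mpr ⟨h, by omega⟩)
    omega
  have hD1b : F2.card ≤ 1 ∨ F5.card = 0 := by
    by_contra hc
    push_neg at hc
    obtain ⟨h2, h5⟩ := hc
    obtain ⟨a, ha, b, hb, hab⟩ := Finset.one_lt_card.mp (by omega : 1 < F2.card)
    obtain ⟨c, hcF⟩ := Finset.card_pos.mp (by omega : 0 < F5.card)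
    obtain ⟨haU, ha2⟩ := hmem2 a ha
    obtain ⟨hbU, hb2⟩ := hmem2 b hb
    obtain ⟨hcU, hc2⟩ := hmem5 c hcF
    have o1 : ¬ (2:ℤ) ∣ a.1 := hmod a haU 2 (by norm_num) (by rw [ha2])
    have o2 : ¬ (2:ℤ) ∣ b.1 := hmod b hbU 2 (by norm_num) (by rw [hb2])
    have o3 : ¬ (5:ℤ) ∣ c.1 := hmod c hcU 5 (by norm_num) (by rw [hc2])
    have nac : a ≠ c := fun h => by rw [h] at ha2; omega
    have nbc : b ≠ c := fun h => by rw [h] at hb2; omega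
    have d1 := hdd a haU b hbU hab
    have d2 := hdd a haU c hcU nac
    have d3 := hdd b hbU c hcU nbc
    rw [ha2, hb2] at d1
    rw [ha2, hc2] at d2
    rw [hb2, hc2] at d3
    have e1 : a.1 ≠ b.1 := fun h => hab (Prod.ext_iff.mpr ⟨h, by omega⟩)
    omega
  have hD2 : F1.card ≤ 2 ∨ F5.card = 0 := by
    by_contra hc
    push_neg at hc
    obtain ⟨h1, h5⟩ := hc
    obtain ⟨m, M, hmU, hMU, hmM, hd5, hcb⟩ := hXfact (by omega)
    obtain ⟨c, hcF⟩ := Finset.card_pos.mp (by omega : 0 < F5.card)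
    obtain ⟨hcU, hc2⟩ := hmem5 c hcF
    have o3 : ¬ (5:ℤ) ∣ c.1 := hmod c hcU 5 (by norm_num) (by rw [hc2])
    have nac : (m, (1:ℤ)) ≠ c := fun h => by rw [← h] at hc2; simp at hc2
    have nbc : (M, (1:ℤ)) ≠ c := fun h => by rw [← h] at hc2; simp at hc2
    have d2 := hdd _ hmU c hcU nac
    have d3 := hdd _ hMU c hcU nbc
    simp only [hc2] at d2 d3
    omega
  have hD3 : F1.card ≤ 3 ∨ F4.card = 0 := by
    by_contra hc
    push_neg at hc
    obtain ⟨h1, h4⟩ := hc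
    obtain ⟨m, M, hmU, hMU, hmM, hd5, hcb⟩ := hXfact (by omega)
    obtain ⟨c, hcF⟩ := Finset.card_pos.mp (by omega : 0 < F4.card)
    obtain ⟨hcU, hc2⟩ := hmem4 c hcF
    have nac : (m, (1:ℤ)) ≠ c := fun h => by rw [← h] at hc2; simp at hc2
    have nbc : (M, (1:ℤ)) ≠ c := fun h => by rw [← h] at hc2; simp at hc2
    have d2 := hdd _ hmU c hcU nac
    have d3 := hdd _ hMU c hcU nbc
    simp only [hc2] at d2 d3
    omega
  have hD4 : F1.card ≤ 4 ∨ F3.card = 0 := by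
    by_contra hc
    push_neg at hc
    obtain ⟨h1, h3⟩ := hc
    obtain ⟨m, M, hmU, hMU, hmM, hd5, hcb⟩ := hXfact (by omega)
    obtain ⟨c, hcF⟩ := Finset.card_pos.mp (by omega : 0 < F3.card)
    obtain ⟨hcU, hc2⟩ := hmem3 c hcF
    have nac : (m, (1:ℤ)) ≠ c := fun h => by rw [← h] at hc2; simp at hc2
    have nbc : (M, (1:ℤ)) ≠ c := fun h => by rw [← h] at hc2; simp at hc2
    have d2 := hdd _ hmU c hcU nac
    have d3 := hdd _ hMU c hcU nbc
    simp only [hc2] at d2 d3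
    omega
  have hD5 : F1.card ≤ 5 ∨ F2.card ≤ 1 := by
    by_contra hc
    push_neg at hc
    obtain ⟨h1, h2⟩ := hc
    obtain ⟨m, M, hmU, hMU, hmM, hd5, hcb⟩ := hXfact (by omega)
    obtain ⟨a, ha, b, hb, hab⟩ := Finset.one_lt_card.mp (by omega : 1 < F2.card)
    obtain ⟨haU, ha2⟩ := hmem2 a ha
    obtain ⟨hbU, hb2⟩ := hmem2 b hb
    have o1 : ¬ (2:ℤ) ∣ a.1 := hmod a haU 2 (by norm_num) (by rw [ha2])
    have o2 : ¬ (2:ℤ) ∣ b.1 := hmod b hbU 2 (by norm_num) (by rw [hb2])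
    have nma : (m, (1:ℤ)) ≠ a := fun h => by rw [← h] at ha2; simp at ha2
    have nMa : (M, (1:ℤ)) ≠ a := fun h => by rw [← h] at ha2; simp at ha2
    have nmb : (m, (1:ℤ)) ≠ b := fun h => by rw [← h] at hb2; simp at hb2
    have nMb : (M, (1:ℤ)) ≠ b := fun h => by rw [← h] at hb2; simp at hb2
    have d1 := hdd _ hmU a haU nma
    have d2 := hdd _ hMU a haU nMa
    have d3 := hdd _ hmU b hbU nmb
    have d4 := hdd _ hMU b hbU nMb
    have d5 := hdd a haU b hbU hab
    simp only [ha2] at d1 d2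
    simp only [hb2] at d3 d4
    rw [ha2, hb2] at d5
    have e1 : a.1 ≠ b.1 := fun h => hab (Prod.ext_iff.mpr ⟨h, by omega⟩)
    omega
  have hD6 : F1.card ≤ 3 ∨ F3.card ≤ 1 ∨ F2.card ≤ 1 := by
    by_contra hc
    push_neg at hc
    obtain ⟨h1, h3, h2⟩ := hc
    obtain ⟨m, M, hmU, hMU, hmM, hd5, hcb⟩ := hXfact (by omega)
    obtain ⟨a, ha, b, hb, hab⟩ := Finset.one_lt_card.mp (by omega : 1 < F2.card)
    obtain ⟨p, hp, q, hq, hpq⟩ := Finset.one_lt_card.mp (by omega : 1 < F3.card)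
    obtain ⟨haU, ha2⟩ := hmem2 a ha
    obtain ⟨hbU, hb2⟩ := hmem2 b hb
    obtain ⟨hpU, hp2⟩ := hmem3 p hp
    obtain ⟨hqU, hq2⟩ := hmem3 q hq
    have o1 : ¬ (2:ℤ) ∣ a.1 := hmod a haU 2 (by norm_num) (by rw [ha2])
    have o2 : ¬ (2:ℤ) ∣ b.1 := hmod b hbU 2 (by norm_num) (by rw [hb2])
    have o3 : ¬ (3:ℤ) ∣ p.1 := hmod p hpU 3 (by norm_num) (by rw [hp2])
    have o4 : ¬ (3:ℤ) ∣ q.1 := hmod q hqU 3 (by norm_num) (by rw [hq2])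
    have nma : (m, (1:ℤ)) ≠ a := fun h => by rw [← h] at ha2; simp at ha2
    have nMa : (M, (1:ℤ)) ≠ a := fun h => by rw [← h] at ha2; simp at ha2
    have nmb : (m, (1:ℤ)) ≠ b := fun h => by rw [← h] at hb2; simp at hb2
    have nMb : (M, (1:ℤ)) ≠ b := fun h => by rw [← h] at hb2; simp at hb2
    have nmp : (m, (1:ℤ)) ≠ p := fun h => by rw [← h] at hp2; simp at hp2
    have nMp : (M, (1:ℤ)) ≠ p := fun h => by rw [← h] at hp2; simp at hp2
    have nmq : (m, (1:ℤ)) ≠ q := fun h => by rw [← h] at hq2; simp at hq2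
    have nMq : (M, (1:ℤ)) ≠ q := fun h => by rw [← h] at hq2; simp at hq2
    have nap : a ≠ p := fun h => by rw [h] at ha2; omega
    have naq : a ≠ q := fun h => by rw [h] at ha2; omega
    have nbp : b ≠ p := fun h => by rw [h] at hb2; omega
    have nbq : b ≠ q := fun h => by rw [h] at hb2; omega
    have d1 := hdd _ hmU a haU nma
    have d2 := hdd _ hMU a haU nMa
    have d3 := hdd _ hmU b hbU nmb
    have d4 := hdd _ hMU b hbU nMb
    have d5 := hdd _ hmU p hpU nmp
    have d6 := hdd _ hMU p hpU nMp
    have d7 := hdd _ hmU q hqU nmq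
    have d8 := hdd _ hMU q hqU nMq
    have d9 := hdd a haU b hbU hab
    have d10 := hdd p hpU q hqU hpq
    have d11 := hdd a haU p hpU nap
    have d12 := hdd a haU q hqU naq
    have d13 := hdd b hbU p hpU nbp
    have d14 := hdd b hbU q hqU nbq
    simp only [ha2] at d1 d2
    simp only [hb2] at d3 d4
    simp only [hp2] at d5 d6
    simp only [hq2] at d7 d8
    rw [ha2, hb2] at d9
    rw [hp2, hq2] at d10
    rw [ha2, hp2] at d11
    rw [ha2, hq2] at d12
    rw [hb2, hp2] at d13
    rw [hb2, hq2] at d14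
    have e1 : a.1 ≠ b.1 := fun h => hab (Prod.ext_iff.mpr ⟨h, by omega⟩)
    have e2 : p.1 ≠ q.1 := fun h => hpq (Prod.ext_iff.mpr ⟨h, by omega⟩)
    omega
  have hD7 : F2.card = 0 ∨ F3.card ≤ 1 ∨ F4.card = 0 ∨ F5.card ≤ 1 := by
    by_contra hc
    push_neg at hc
    obtain ⟨h2, h3, h4, h5⟩ := hc
    obtain ⟨a, haF⟩ := Finset.card_pos.mp (by omega : 0 < F2.card)
    obtain ⟨p, hp, q, hq, hpq⟩ := Finset.one_lt_card.mp (by omega : 1 < F3.card)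
    obtain ⟨c, hcF⟩ := Finset.card_pos.mp (by omega : 0 < F4.card)
    obtain ⟨r, hr, s, hs, hrs⟩ := Finset.one_lt_card.mp (by omega : 1 < F5.card)
    obtain ⟨haU, ha2⟩ := hmem2 a haF
    obtain ⟨hpU, hp2⟩ := hmem3 p hp
    obtain ⟨hqU, hq2⟩ := hmem3 q hq
    obtain ⟨hcU, hc2⟩ := hmem4 c hcF
    obtain ⟨hrU, hr2⟩ := hmem5 r hr
    obtain ⟨hsU, hs2⟩ := hmem5 s hs
    have o1 : ¬ (2:ℤ) ∣ a.1 := hmod a haU 2 (by norm_num) (by rw [ha2])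
    have o2 : ¬ (3:ℤ) ∣ p.1 := hmod p hpU 3 (by norm_num) (by rw [hp2])
    have o3 : ¬ (3:ℤ) ∣ q.1 := hmod q hqU 3 (by norm_num) (by rw [hq2])
    have o4 : ¬ (2:ℤ) ∣ c.1 := hmod c hcU 2 (by norm_num) (by rw [hc2]; norm_num)
    have o5 : ¬ (5:ℤ) ∣ r.1 := hmod r hrU 5 (by norm_num) (by rw [hr2])
    have o6 : ¬ (5:ℤ) ∣ s.1 := hmod s hsU 5 (by norm_num) (by rw [hs2])
    have nap : a ≠ p := fun h => by rw [h] at ha2; omega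
    have naq : a ≠ q := fun h => by rw [h] at ha2; omega
    have nac : a ≠ c := fun h => by rw [h] at ha2; omega
    have nar : a ≠ r := fun h => by rw [h] at ha2; omega
    have nas : a ≠ s := fun h => by rw [h] at ha2; omega
    have npc : p ≠ c := fun h => by rw [h] at hp2; omega
    have npr : p ≠ r := fun h => by rw [h] at hp2; omega
    have nps : p ≠ s := fun h => by rw [h] at hp2; omega
    have nqc : q ≠ c := fun h => by rw [h] at hq2; omega
    have nqr : q ≠ r := fun h => by rw [h] at hq2; omega
    have nqs : q ≠ s := fun h => by rw [h] at hq2; omega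
    have ncr : c ≠ r := fun h => by rw [h] at hc2; omega
    have ncs : c ≠ s := fun h => by rw [h] at hc2; omega
    have d1 := hdd a haU p hpU nap
    have d2 := hdd a haU q hqU naq
    have d3 := hdd a haU c hcU nac
    have d4 := hdd a haU r hrU nar
    have d5 := hdd a haU s hsU nas
    have d6 := hdd p hpU q hqU hpq
    have d7 := hdd p hpU c hcU npc
    have d8 := hdd p hpU r hrU npr
    have d9 := hdd p hpU s hsU nps
    have d10 := hdd q hqU c hcU nqc
    have d11 := hdd q hqU r hrU nqr
    have d12 := hdd q hqU s hsU nqs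
    have d13 := hdd c hcU r hrU ncr
    have d14 := hdd c hcU s hsU ncs
    have d15 := hdd r hrU s hsU hrs
    rw [ha2, hp2] at d1
    rw [ha2, hq2] at d2
    rw [ha2, hc2] at d3
    rw [ha2, hr2] at d4
    rw [ha2, hs2] at d5
    rw [hp2, hq2] at d6
    rw [hp2, hc2] at d7
    rw [hp2, hr2] at d8
    rw [hp2, hs2] at d9
    rw [hq2, hc2] at d10
    rw [hq2, hr2] at d11
    rw [hq2, hs2] at d12
    rw [hc2, hr2] at d13
    rw [hc2, hs2] at d14
    rw [hr2, hs2] at d15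
    have e1 : p.1 ≠ q.1 := fun h => hpq (Prod.ext_iff.mpr ⟨h, by omega⟩)
    have e2 : r.1 ≠ s.1 := fun h => hrs (Prod.ext_iff.mpr ⟨h, by omega⟩)
    have o1' : a.1 % 2 = 1 := by omega
    have o2' : p.1 % 3 ≠ 0 := by omega
    have o3' : q.1 % 3 ≠ 0 := by omega
    have o4' : c.1 % 2 = 1 := by omega
    have o5' : r.1 % 5 ≠ 0 := by omega
    have o6' : s.1 % 5 ≠ 0 := by omega
    have hadj3 : q.1 = p.1 + 1 ∨ p.1 = q.1 + 1 := by omega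
    have hadj5 : s.1 = r.1 + 1 ∨ r.1 = s.1 + 1 := by omega
    clear o1 o2 o3 o4 o5 o6
    rcases hadj3 with h3' | h3' <;> rcases hadj5 with h5' | h5'
    · exact chainD7 a.1 p.1 c.1 r.1 o1' (by omega) o4' (by omega) (by omega)
        (by rw [abs_le]; omega) (by rw [abs_le]; omega) (by rw [abs_le]; omega)
        (by rw [abs_le]; omega) (by rw [abs_le]; omega) (by rw [abs_le]; omega)
        (by rw [abs_le]; omega) (by rw [abs_le]; omega) (by rw [abs_le]; omega)
    · exact chainD7 a.1 p.1 c.1 s.1 o1' (by omega) o4' (by omega) (by omega)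
        (by rw [abs_le]; omega) (by rw [abs_le]; omega) (by rw [abs_le]; omega)
        (by rw [abs_le]; omega) (by rw [abs_le]; omega) (by rw [abs_le]; omega)
        (by rw [abs_le]; omega) (by rw [abs_le]; omega) (by rw [abs_le]; omega)
    · exact chainD7 a.1 q.1 c.1 r.1 o1' (by omega) o4' (by omega) (by omega)
        (by rw [abs_le]; omega) (by rw [abs_le]; omega) (by rw [abs_le]; omega)
        (by rw [abs_le]; omega) (by rw [abs_le]; omega) (by rw [abs_le]; omega)
        (by rw [abs_le]; omega) (by rw [abs_le]; omega) (by rw [abs_le]; omega)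
    · exact chainD7 a.1 q.1 c.1 s.1 o1' (by omega) o4' (by omega) (by omega)
        (by rw [abs_le]; omega) (by rw [abs_le]; omega) (by rw [abs_le]; omega)
        (by rw [abs_le]; omega) (by rw [abs_le]; omega) (by rw [abs_le]; omega)
        (by rw [abs_le]; omega) (by rw [abs_le]; omega) (by rw [abs_le]; omega)
  rcases hD1a with h1a | h1a <;> rcases hD1b with h1b | h1b <;>
    rcases hD2 with hA | hA <;> rcases hD3 with hB | hB <;>
    rcases hD4 with hC | hC <;> rcases hD5 with hD | hD <;>
    rcases hD6 with hE | hE | hE <;> rcases hD7 with hF | hF | hF | hF <;>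
    omega

private lemma sd_neg_left (a b : ℤ × ℤ) : slopeDist (-a) b = slopeDist a b := by
  simp only [slopeDist, Prod.fst_neg, Prod.snd_neg]
  rw [show -a.1 * b.2 - -a.2 * b.1 = -(a.1 * b.2 - a.2 * b.1) by ring, abs_neg]

private lemma sd_neg_right (a b : ℤ × ℤ) : slopeDist a (-b) = slopeDist a b := by
  simp only [slopeDist, Prod.fst_neg, Prod.snd_neg]
  rw [show a.1 * -b.2 - a.2 * -b.1 = -(a.1 * b.2 - a.2 * b.1) by ring, abs_neg]

theorem at_most_eight_slopes_pairwise_dist_le_five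
    (S : Finset (ℤ × ℤ))
    (hprim : ∀ v ∈ S, Primitive v)
    (hdistinct : ∀ v ∈ S, ∀ w ∈ S, v ≠ w → ¬ SameSlope v w)
    (hdist : ∀ v ∈ S, ∀ w ∈ S, v ≠ w → slopeDist v w ≤ 5) :
    S.card ≤ 8 := by
  classical
  by_contra hcard
  push_neg at hcard
  have hS : S.Nonempty := Finset.card_pos.mp (by omega)
  obtain ⟨v0, hv0⟩ := hS
  have hp0 : IsCoprime v0.1 v0.2 := Int.isCoprime_iff_gcd_eq_one.mpr (hprim v0 hv0)
  obtain ⟨x, y, hbez⟩ := hp0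
  set Φ : ℤ × ℤ → ℤ × ℤ := fun w => (x * w.1 + y * w.2, v0.1 * w.2 - v0.2 * w.1) with hΦ
  have hinv : ∀ w : ℤ × ℤ, (v0.1 * (Φ w).1 - y * (Φ w).2, v0.2 * (Φ w).1 + x * (Φ w).2) = w := by
    intro w
    simp only [hΦ]
    have h1 : v0.1 * (x * w.1 + y * w.2) - y * (v0.1 * w.2 - v0.2 * w.1) = w.1 := by
      linear_combination w.1 * hbez
    have h2 : v0.2 * (x * w.1 + y * w.2) + x * (v0.1 * w.2 - v0.2 * w.1) = w.2 := by
      linear_combination w.2 * hbez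
    rw [h1, h2]
  have hΦinj : Function.Injective Φ := by
    intro a b h
    rw [← hinv a, ← hinv b, h]
  have hΦneg : ∀ w : ℤ × ℤ, Φ (-w) = -Φ w := by
    intro w
    simp only [hΦ, Prod.fst_neg, Prod.snd_neg, Prod.neg_mk]
    exact Prod.ext_iff.mpr ⟨by ring, by ring⟩
  have hdet : ∀ w z : ℤ × ℤ, (Φ w).1 * (Φ z).2 - (Φ w).2 * (Φ z).1 = w.1 * z.2 - w.2 * z.1 := by
    intro w z
    simp only [hΦ]
    linear_combination (w.1 * z.2 - w.2 * z.1) * hbez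
  set S' := S.image Φ with hS'
  have hcard' : 8 < S'.card := by
    rw [hS', Finset.card_image_of_injective S hΦinj]
    exact hcard
  have h10 : ((1:ℤ), (0:ℤ)) ∈ S' := by
    refine Finset.mem_image.mpr ⟨v0, hv0, ?_⟩
    simp only [hΦ]
    rw [show v0.1 * v0.2 - v0.2 * v0.1 = 0 by ring, hbez]
  have hprim' : ∀ v ∈ S', Primitive v := by
    intro v hv
    obtain ⟨w, hw, rfl⟩ := Finset.mem_image.mp hv
    obtain ⟨σ, τ, hστ⟩ := Int.isCoprime_iff_gcd_eq_one.mpr (hprim w hw)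
    refine Int.isCoprime_iff_gcd_eq_one.mp ⟨σ * v0.1 + τ * v0.2, τ * x - σ * y, ?_⟩
    simp only [hΦ]
    linear_combination (σ * w.1 + τ * w.2) * hbez + hστ
  have hdistinct' : ∀ v ∈ S', ∀ w ∈ S', v ≠ w → ¬ SameSlope v w := by
    intro v hv w hw hvw hss
    obtain ⟨a, ha, rfl⟩ := Finset.mem_image.mp hv
    obtain ⟨b, hb, rfl⟩ := Finset.mem_image.mp hw
    have hab : a ≠ b := fun h => hvw (by rw [h])
    rcases hss with h | h
    · exact hvw (h ▸ rfl)
    · rw [← hΦneg b] at h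
      exact hdistinct a ha b hb hab (Or.inr (hΦinj h))
  have hdist' : ∀ v ∈ S', ∀ w ∈ S', v ≠ w → slopeDist v w ≤ 5 := by
    intro v hv w hw hvw
    obtain ⟨a, ha, rfl⟩ := Finset.mem_image.mp hv
    obtain ⟨b, hb, rfl⟩ := Finset.mem_image.mp hw
    have hab : a ≠ b := fun h => hvw (by rw [h])
    have : slopeDist (Φ a) (Φ b) = slopeDist a b := by
      simp only [slopeDist]
      rw [hdet]
    rw [this]
    exact hdist a ha b hb hab
  -- now work with T = S' minus (1,0)
  set T := S'.erase ((1:ℤ), (0:ℤ)) with hT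
  have hTcard : 8 ≤ T.card := by
    rw [hT, Finset.card_erase_of_mem h10]
    omega
  have hTmem : ∀ v ∈ T, v ∈ S' ∧ v ≠ ((1:ℤ), (0:ℤ)) := by
    intro v hv
    have := Finset.mem_erase.mp hv
    exact ⟨this.2, this.1⟩
  have hy0 : ∀ v ∈ T, v.2 ≠ 0 ∧ |v.2| ≤ 5 := by
    intro v hv
    obtain ⟨hvS, hvne⟩ := hTmem v hv
    constructor
    · intro h0
      have hg := hprim' v hvS
      unfold Primitive at hg
      rw [h0, Int.gcd_zero_right] at hg
      have h1 : v.1 = 1 ∨ v.1 = -1 := by omega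
      rcases h1 with h1 | h1
      · exact hvne (Prod.ext_iff.mpr ⟨h1, h0⟩)
      · refine hdistinct' v hvS ((1:ℤ), (0:ℤ)) h10 hvne (Or.inr ?_)
        exact Prod.ext_iff.mpr ⟨by simpa using h1, by simpa using h0⟩
    · have hd := hdist' v hvS ((1:ℤ), (0:ℤ)) h10 hvne
      simp only [slopeDist] at hd
      calc |v.2| = |v.1 * 0 - v.2 * 1| := by rw [show v.1 * 0 - v.2 * 1 = -v.2 by ring, abs_neg]
        _ ≤ 5 := hd
  set N : ℤ × ℤ → ℤ × ℤ := fun v => if 0 < v.2 then v else -v with hN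
  set U := T.image N with hU
  have hNinj : Set.InjOn N T := by
    intro a ha b hb h
    have hss : a = b ∨ a = -b := by
      simp only [hN] at h
      split_ifs at h with h1 h2 h2
      · exact Or.inl h
      · exact Or.inr h
      · exact Or.inr (by rw [← h, neg_neg])
      · exact Or.inl (neg_injective h)
    rcases hss with h' | h'
    · exact h'
    · by_cases hab : a = b
      · exact hab
      · exact absurd (Or.inr h' : SameSlope a b)
          (hdistinct' a (hTmem a ha).1 b (hTmem b hb).1 hab)
  have hUcard : 8 ≤ U.card := by
    rw [hU, Finset.card_image_of_injOn hNinj]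
    exact hTcard
  have hNcases : ∀ v : ℤ × ℤ, N v = v ∨ N v = -v := by
    intro v
    simp only [hN]
    split_ifs <;> simp
  have hUy : ∀ u ∈ U, 1 ≤ u.2 ∧ u.2 ≤ 5 := by
    intro u hu
    obtain ⟨v, hv, rfl⟩ := Finset.mem_image.mp hu
    obtain ⟨hv2, hv5⟩ := hy0 v hv
    rw [abs_le] at hv5
    simp only [hN]
    split_ifs with h1
    · constructor <;> omega
    · simp only [Prod.snd_neg]
      constructor <;> omega
  have hUg : ∀ u ∈ U, Int.gcd u.1 u.2 = 1 := by
    intro u hu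
    obtain ⟨v, hv, rfl⟩ := Finset.mem_image.mp hu
    have hg := hprim' v (hTmem v hv).1
    unfold Primitive at hg
    rcases hNcases v with h | h <;> rw [h]
    · exact hg
    · simp only [Prod.fst_neg, Prod.snd_neg, Int.gcd]
      simpa [Int.natAbs_neg, Int.gcd_eq_natAbs_gcd_natAbs] using hg
  have hUd : ∀ u ∈ U, ∀ w ∈ U, u ≠ w → |u.1 * w.2 - u.2 * w.1| ≤ 5 := by
    intro u hu w hw huw
    obtain ⟨a, ha, rfl⟩ := Finset.mem_image.mp hu
    obtain ⟨b, hb, rfl⟩ := Finset.mem_image.mp hw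
    have hab : a ≠ b := fun h => huw (by rw [h])
    have hsd : slopeDist (N a) (N b) = slopeDist a b := by
      rcases hNcases a with h1 | h1 <;> rcases hNcases b with h2 | h2 <;> rw [h1, h2]
      · rw [sd_neg_right]
      · rw [sd_neg_left]
      · rw [sd_neg_left, sd_neg_right]
    have := hdist' a (hTmem a ha).1 b (hTmem b hb).1 hab
    calc |(N a).1 * (N b).2 - (N a).2 * (N b).1| = slopeDist (N a) (N b) := rfl
      _ = slopeDist a b := hsd
      _ ≤ 5 := this
  have := key U hUy hUg hUd
  omega
end

section
/- Any set of distinct slopes (primitive vectors in Z^2 up to sign) with pairwise distance at most 2 has at most 4 elements. -/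
/-- A primitive vector cannot have both coordinates even. -/
lemma prim_odd {v : ℤ × ℤ} (h : Primitive v) (h1 : (2:ℤ) ∣ v.1) (h2 : (2:ℤ) ∣ v.2) : False := by
  obtain ⟨x, y, hxy⟩ := Int.isCoprime_iff_gcd_eq_one.mpr h
  have : (2:ℤ) ∣ 1 := hxy ▸ dvd_add (h1.mul_left x) (h2.mul_left y)
  norm_num at this

/-- Two primitive vectors with even determinant are congruent mod 2. -/
lemma modtwo {v w : ℤ × ℤ} (hv : Primitive v) (hw : Primitive w)
    (h : (2:ℤ) ∣ (v.1 * w.2 - v.2 * w.1)) : (2:ℤ) ∣ (v.1 - w.1) ∧ (2:ℤ) ∣ (v.2 - w.2) := by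
  have key : ∀ a b c d : ZMod 2, ¬(a = 0 ∧ b = 0) → ¬(c = 0 ∧ d = 0) →
      a * d - b * c = 0 → a = c ∧ b = d := by decide
  have cast0 : ∀ n : ℤ, (2:ℤ) ∣ n ↔ ((n : ZMod 2) = 0) := by
    intro n
    rw [ZMod.intCast_zmod_eq_zero_iff_dvd]
    norm_num
  have h0 : (v.1 : ZMod 2) * (w.2 : ZMod 2) - (v.2 : ZMod 2) * (w.1 : ZMod 2) = 0 := by
    have := (cast0 _).mp h
    push_cast at this
    exact this
  have hv' : ¬((v.1 : ZMod 2) = 0 ∧ (v.2 : ZMod 2) = 0) := fun ⟨h1, h2⟩ =>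
    prim_odd hv ((cast0 _).mpr h1) ((cast0 _).mpr h2)
  have hw' : ¬((w.1 : ZMod 2) = 0 ∧ (w.2 : ZMod 2) = 0) := fun ⟨h1, h2⟩ =>
    prim_odd hw ((cast0 _).mpr h1) ((cast0 _).mpr h2)
  obtain ⟨e1, e2⟩ := key _ _ _ _ hv' hw' h0
  constructor
  · rw [cast0]; push_cast; rw [sub_eq_zero]; exact e1
  · rw [cast0]; push_cast; rw [sub_eq_zero]; exact e2

/-- Primitive vectors with zero determinant represent the same slope. -/
lemma det_zero_same {v w : ℤ × ℤ} (hv : Primitive v) (hw : Primitive w)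
    (h : v.1 * w.2 - v.2 * w.1 = 0) : SameSlope v w := by
  obtain ⟨a, b⟩ := v
  obtain ⟨c, d⟩ := w
  simp only [Primitive] at hv hw
  simp only at h
  have hco : IsCoprime a b := Int.isCoprime_iff_gcd_eq_one.mpr hv
  have hco' : IsCoprime c d := Int.isCoprime_iff_gcd_eq_one.mpr hw
  have h1 : a ∣ c := hco.dvd_of_dvd_mul_left ⟨d, by linarith⟩
  have h2 : c ∣ a := hco'.dvd_of_dvd_mul_right ⟨b, by linarith⟩
  have h3 : b ∣ d := hco.symm.dvd_of_dvd_mul_left ⟨c, by linarith⟩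
  have h4 : d ∣ b := hco'.symm.dvd_of_dvd_mul_left ⟨a, by linarith⟩
  have hac : a = c ∨ a = -c := Int.associated_iff.mp (associated_of_dvd_dvd h1 h2)
  have hbd : b = d ∨ b = -d := Int.associated_iff.mp (associated_of_dvd_dvd h3 h4)
  have main : (a = c ∧ b = d) ∨ (a = -c ∧ b = -d) := by
    rcases hac with h5 | h5 <;> rcases hbd with h6 | h6
    · exact Or.inl ⟨h5, h6⟩
    · have h2cd : 2 * (c * d) = 0 := by rw [h5, h6] at h; linear_combination h
      have hcd : c * d = 0 := by linarith
      rcases mul_eq_zero.mp hcd with h0 | h0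
      · exact Or.inr ⟨by omega, h6⟩
      · exact Or.inl ⟨h5, by omega⟩
    · have h2cd : 2 * (c * d) = 0 := by rw [h5, h6] at h; linear_combination -h
      have hcd : c * d = 0 := by linarith
      rcases mul_eq_zero.mp hcd with h0 | h0
      · exact Or.inl ⟨by omega, h6⟩
      · exact Or.inr ⟨h5, by omega⟩
    · exact Or.inr ⟨h5, h6⟩
  rcases main with ⟨h5, h6⟩ | ⟨h5, h6⟩
  · exact Or.inl (by simp [Prod.ext_iff, h5, h6])
  · exact Or.inr (by simp [Prod.ext_iff, h5, h6])

/-- The 16 candidate vectors, with both coordinates in {-2,-1,1,2}. -/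
def R16 : Finset (ℤ × ℤ) := ({-2,-1,1,2} : Finset ℤ) ×ˢ ({-2,-1,1,2} : Finset ℤ)

/-- Compatibility: determinant has absolute value 1 or 2. -/
def Ok (x y : ℤ × ℤ) : Prop :=
  x.1 * y.2 - x.2 * y.1 = -2 ∨ x.1 * y.2 - x.2 * y.1 = -1 ∨
  x.1 * y.2 - x.2 * y.1 = 1 ∨ x.1 * y.2 - x.2 * y.1 = 2

instance (x y : ℤ × ℤ) : Decidable (Ok x y) := by unfold Ok; infer_instance

/-- No three of the sixteen candidates are pairwise compatible. -/
lemma key16 : ∀ x ∈ R16, ∀ y ∈ R16, ∀ z ∈ R16, Ok x y → Ok x z → Ok y z → False := by decide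

theorem at_most_four_slopes_pairwise_dist_le_two
    (S : Finset (ℤ × ℤ))
    (hprim : ∀ v ∈ S, Primitive v)
    (hdistinct : ∀ v ∈ S, ∀ w ∈ S, v ≠ w → ¬ SameSlope v w)
    (hdist : ∀ v ∈ S, ∀ w ∈ S, v ≠ w → slopeDist v w ≤ 2) :
    S.card ≤ 4 := by
  by_contra hcard
  push_neg at hcard
  have hdet : ∀ v ∈ S, ∀ w ∈ S, v ≠ w →
      (v.1 * w.2 - v.2 * w.1 ≠ 0 ∧ -2 ≤ v.1 * w.2 - v.2 * w.1 ∧ v.1 * w.2 - v.2 * w.1 ≤ 2) := by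
    intro v hv w hw hne
    have hle := hdist v hv w hw hne
    unfold slopeDist at hle
    have hb := abs_le.mp hle
    exact ⟨fun h0 => hdistinct v hv w hw hne (det_zero_same (hprim v hv) (hprim w hw) h0),
      hb.1, hb.2⟩
  by_cases hA : ∃ u ∈ S, ∃ v ∈ S, u ≠ v ∧
      (u.1 * v.2 - u.2 * v.1 = 1 ∨ u.1 * v.2 - u.2 * v.1 = -1)
  · -- there is a pair at distance 1 : use it as a basis
    obtain ⟨u, hu, v, hv, huv, hD⟩ := hA
    set f : ℤ × ℤ → ℤ × ℤ := fun w => (v.2 * w.1 - v.1 * w.2, u.1 * w.2 - u.2 * w.1) with hf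
    have hvS : v ∈ S.erase u := Finset.mem_erase.mpr ⟨Ne.symm huv, hv⟩
    have hc3 : 3 ≤ ((S.erase u).erase v).card := by
      rw [Finset.card_erase_of_mem hvS, Finset.card_erase_of_mem hu]; omega
    obtain ⟨t, hts, ht⟩ := Finset.exists_subset_card_eq (s := _) (n := 3) hc3
    obtain ⟨a, b, c, hab, hac, hbc, rfl⟩ := Finset.card_eq_three.mp ht
    have hmem : ∀ x ∈ ({a, b, c} : Finset (ℤ × ℤ)), x ∈ S ∧ x ≠ u ∧ x ≠ v := by
      intro x hx
      have := hts hx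
      rw [Finset.mem_erase, Finset.mem_erase] at this
      exact ⟨this.2.2, this.2.1, this.1⟩
    have hR : ∀ x ∈ ({a, b, c} : Finset (ℤ × ℤ)), f x ∈ R16 := by
      intro x hx
      obtain ⟨hxS, hxu, hxv⟩ := hmem x hx
      have h1 := hdet v hv x hxS (Ne.symm hxv)
      have h2 := hdet u hu x hxS (Ne.symm hxu)
      simp only [hf, R16, Finset.mem_product, Finset.mem_insert, Finset.mem_singleton]
      constructor <;> omega
    have hOk : ∀ x ∈ ({a, b, c} : Finset (ℤ × ℤ)), ∀ y ∈ ({a, b, c} : Finset (ℤ × ℤ)),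
        x ≠ y → Ok (f x) (f y) := by
      intro x hx y hy hxy
      obtain ⟨hxS, _, _⟩ := hmem x hx
      obtain ⟨hyS, _, _⟩ := hmem y hy
      have hd := hdet x hxS y hyS hxy
      have hid : (f x).1 * (f y).2 - (f x).2 * (f y).1
          = (u.1 * v.2 - u.2 * v.1) * (x.1 * y.2 - x.2 * y.1) := by simp only [hf]; ring
      unfold Ok
      rw [hid]
      rcases hD with h1 | h1 <;> rw [h1] <;> omega
    exact key16 (f a) (hR a (by simp)) (f b) (hR b (by simp)) (f c) (hR c (by simp))
      (hOk a (by simp) b (by simp) hab) (hOk a (by simp) c (by simp) hac)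
      (hOk b (by simp) c (by simp) hbc)
  · -- all pairs at distance 2
    push_neg at hA
    have hc3 : 3 ≤ S.card := by omega
    obtain ⟨t, hts, ht⟩ := Finset.exists_subset_card_eq (s := _) (n := 3) hc3
    obtain ⟨a, b, c, hab, hac, hbc, rfl⟩ := Finset.card_eq_three.mp ht
    have haS : a ∈ S := hts (by simp)
    have hbS : b ∈ S := hts (by simp)
    have hcS : c ∈ S := hts (by simp)
    have two : ∀ x ∈ S, ∀ y ∈ S, x ≠ y →
        (x.1 * y.2 - x.2 * y.1 = 2 ∨ x.1 * y.2 - x.2 * y.1 = -2) := by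
      intro x hx y hy hxy
      have h1 := hdet x hx y hy hxy
      have h2 := hA x hx y hy hxy
      omega
    have hp := two b hbS c hcS hbc
    have hq := two a haS c hcS hac
    have hr := two a haS b hbS hab
    obtain ⟨hm1, hm2⟩ := modtwo (hprim a haS) (hprim b hbS)
      (by rcases hr with h | h <;> rw [h] <;> norm_num)
    have pl1 : (b.1 * c.2 - b.2 * c.1) * a.1 - (a.1 * c.2 - a.2 * c.1) * b.1
        + (a.1 * b.2 - a.2 * b.1) * c.1 = 0 := by ring
    have pl2 : (b.1 * c.2 - b.2 * c.1) * a.2 - (a.1 * c.2 - a.2 * c.1) * b.2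
        + (a.1 * b.2 - a.2 * b.1) * c.2 = 0 := by ring
    have hc1 : (2:ℤ) ∣ c.1 := by
      rcases hp with h | h <;> rcases hq with h' | h' <;> rcases hr with h'' | h'' <;>
        rw [h, h', h''] at pl1 <;> omega
    have hc2 : (2:ℤ) ∣ c.2 := by
      rcases hp with h | h <;> rcases hq with h' | h' <;> rcases hr with h'' | h'' <;>
        rw [h, h', h''] at pl2 <;> omega
    exact prim_odd (hprim c hcS) hc1 hc2
end

section
/- Suppose r1, ..., rk are distinct slopes each at distance at most 1 from a fixed slope r0 and pairwise at distance at most 1 from each other, with all ri distinct from r0. Then k ≤ 2. -/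
lemma det_ne_zero_of_not_sameSlope (v w : ℤ × ℤ)
    (hv : Primitive v) (hw : Primitive w) (h : ¬ SameSlope v w) :
    v.1 * w.2 - v.2 * w.1 ≠ 0 := by
  intro h0
  have hvw : v.1 * w.2 = v.2 * w.1 := by omega
  obtain ⟨x, y, hxy⟩ : ∃ x y : ℤ, v.1 * x + v.2 * y = 1 := by
    have := Int.gcd_eq_gcd_ab v.1 v.2
    exact ⟨Int.gcdA v.1 v.2, Int.gcdB v.1 v.2, by
      rw [← this] at *; simp [Primitive] at hv; omega⟩
  set u : ℤ := w.1 * x + w.2 * y with hu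
  have h1 : w.1 = u * v.1 := by
    have : u * v.1 = w.1 * (v.1 * x + v.2 * y) := by rw [hu]; linear_combination y * hvw
    rw [this, hxy]; ring
  have h2 : w.2 = u * v.2 := by
    have : u * v.2 = w.2 * (v.1 * x + v.2 * y) := by rw [hu]; linear_combination (-x) * hvw + (y - y) * hvw
    rw [this, hxy]; ring
  have hg : Int.gcd (u * v.1) (u * v.2) = 1 := by rw [← h1, ← h2]; exact hw
  rw [Int.gcd_mul_left, hv, mul_one] at hg
  have hu1 : u = 1 ∨ u = -1 := by
    rcases Int.natAbs_eq u with h | h <;> omega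
  apply h
  rcases hu1 with h | h
  · left; rw [h] at h1 h2; simp at h1 h2
    exact Prod.ext h1.symm h2.symm
  · right; rw [h] at h1 h2
    have : v = (-w.1, -w.2) := Prod.ext (by omega) (by omega)
    simpa [Prod.ext_iff] using this

theorem at_most_two_other_slopes
    (k : ℕ) (r0 : ℤ × ℤ) (r : Fin k → ℤ × ℤ)
    (hprim0 : Primitive r0) (hprim : ∀ i, Primitive (r i))
    (hdistinct : ∀ i j, i ≠ j → ¬ SameSlope (r i) (r j))
    (hne0 : ∀ i, ¬ SameSlope (r i) r0)
    (hd0 : ∀ i, slopeDist r0 (r i) ≤ 1)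
    (hd : ∀ i j, slopeDist (r i) (r j) ≤ 1) :
    k ≤ 2 := by
  by_contra hk
  push_neg at hk
  have h3 : 3 ≤ k := hk
  set a := r ⟨0, by omega⟩ with ha
  set b := r ⟨1, by omega⟩ with hb
  set c := r ⟨2, by omega⟩ with hc
  have pm : ∀ v w : ℤ × ℤ, Primitive v → Primitive w → ¬ SameSlope v w →
      slopeDist v w ≤ 1 →
      v.1 * w.2 - v.2 * w.1 = 1 ∨ v.1 * w.2 - v.2 * w.1 = -1 := by
    intro v w hv hw hs hdvw
    have hne := det_ne_zero_of_not_sameSlope v w hv hw hs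
    have := abs_le.mp hdvw
    omega
  have hs0 : ∀ v, ¬ SameSlope v r0 → ¬ SameSlope r0 v := by
    intro v h hh
    exact h (by rcases hh with h' | h' <;> [exact Or.inl h'.symm; exact Or.inr (by simp [h'])])
  have hxa := pm r0 a hprim0 (hprim _) (hs0 _ (hne0 _)) (hd0 _)
  have hxb := pm r0 b hprim0 (hprim _) (hs0 _ (hne0 _)) (hd0 _)
  have hxc := pm r0 c hprim0 (hprim _) (hs0 _ (hne0 _)) (hd0 _)
  have hab := pm a b (hprim _) (hprim _) (hdistinct _ _ (by simp [Fin.ext_iff])) (hd _ _)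
  have hac := pm a c (hprim _) (hprim _) (hdistinct _ _ (by simp [Fin.ext_iff])) (hd _ _)
  have hbc := pm b c (hprim _) (hprim _) (hdistinct _ _ (by simp [Fin.ext_iff])) (hd _ _)
  have hid : (b.1 * c.2 - b.2 * c.1) * (r0.1 * a.2 - r0.2 * a.1)
      - (a.1 * c.2 - a.2 * c.1) * (r0.1 * b.2 - r0.2 * b.1)
      + (a.1 * b.2 - a.2 * b.1) * (r0.1 * c.2 - r0.2 * c.1) = 0 := by ring
  rcases hxa with h1 | h1 <;> rcases hxb with h2 | h2 <;> rcases hxc with h3 | h3 <;>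
    rcases hab with h4 | h4 <;> rcases hac with h5 | h5 <;> rcases hbc with h6 | h6 <;>
    rw [h1, h2, h3, h4, h5, h6] at hid <;> norm_num at hid
end

section
/- Any set of distinct slopes (primitive vectors in Z^2 up to sign) with pairwise distances at most 5 has at most 12 elements. -/
/-!
Reduction modulo 7 sends a slope `(a, b)` to the point `[a : b]` of the projective line over
`ZMod 7`, which has 8 points. Two slopes with the same image have determinant divisible by 7,
while two distinct slopes have nonzero determinant, so at distance at most 5 the reduction is
injective and there are in fact at most 8 slopes.
-/

namespace Primitive

variable {v w : ℤ × ℤ}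

lemma ne_zero (hv : Primitive v) : v ≠ 0 := by
  rintro rfl
  simp [Primitive] at hv

lemma exists_eq_smul_of_mul_eq (hv : Primitive v) (h : v.1 * w.2 = v.2 * w.1) :
    ∃ c : ℤ, w = c • v := by
  obtain ⟨a, b, hab⟩ := Int.isCoprime_iff_gcd_eq_one.mpr hv
  refine ⟨a * w.1 + b * w.2, Prod.ext ?_ ?_⟩
  · simp only [Prod.smul_fst, smul_eq_mul]
    linear_combination (-w.1) * hab - b * h
  · simp only [Prod.smul_snd, smul_eq_mul]
    linear_combination (-w.2) * hab + a * h

lemma sameSlope_of_mul_eq (hv : Primitive v) (hw : Primitive w)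
    (h : v.1 * w.2 = v.2 * w.1) : SameSlope v w := by
  obtain ⟨c, rfl⟩ := hv.exists_eq_smul_of_mul_eq h
  obtain ⟨d, hd⟩ := hw.exists_eq_smul_of_mul_eq (v := c • v) (w := v) (by linarith)
  have hdc : d * c = 1 := by
    have : (d * c - 1) • v = 0 := by rw [sub_smul, mul_smul, ← hd, one_smul, sub_self]
    exact sub_eq_zero.mp ((smul_eq_zero.mp this).resolve_right hv.ne_zero)
  rcases Int.eq_one_or_neg_one_of_mul_eq_one (mul_comm d c ▸ hdc) with rfl | rfl
  · exact Or.inl (one_smul ℤ v).symm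
  · exact Or.inr (by simp)

lemma slopeDist_pos (hv : Primitive v) (hw : Primitive w) (h : ¬SameSlope v w) :
    0 < slopeDist v w :=
  abs_pos.mpr (sub_ne_zero.mpr fun he => h (hv.sameSlope_of_mul_eq hw he))

end Primitive

/-- The point `[v.1 : v.2]` of the projective line over `ZMod p`, with `none` the point at
infinity `[0 : 1]`. -/
def reduceMod (p : ℕ) (v : ℤ × ℤ) : Option (ZMod p) :=
  if (v.1 : ZMod p) = 0 then none else some ((v.2 : ZMod p) * (v.1 : ZMod p)⁻¹)

lemma dvd_det_of_reduceMod_eq {p : ℕ} [Fact p.Prime] {v w : ℤ × ℤ}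
    (h : reduceMod p v = reduceMod p w) : (p : ℤ) ∣ v.1 * w.2 - v.2 * w.1 := by
  rw [← ZMod.intCast_zmod_eq_zero_iff_dvd]
  push_cast
  unfold reduceMod at h
  by_cases hv : (v.1 : ZMod p) = 0 <;> by_cases hw : (w.1 : ZMod p) = 0 <;>
    simp only [hv, hw, if_true, if_false, reduceCtorEq, Option.some.injEq] at h
  · simp [hv, hw]
  · field_simp at h
    linear_combination -h

theorem card_le_of_slopeDist_lt (p : ℕ) [Fact p.Prime] (S : Finset (ℤ × ℤ))
    (hpos : ∀ v ∈ S, ∀ w ∈ S, v ≠ w → 0 < slopeDist v w)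
    (hlt : ∀ v ∈ S, ∀ w ∈ S, v ≠ w → slopeDist v w < p) :
    S.card ≤ p + 1 := by
  have hinj : Set.InjOn (reduceMod p) S := by
    intro v hv w hw hvw
    by_contra hne
    have hdvd := (dvd_abs _ _).mpr (dvd_det_of_reduceMod_eq hvw)
    exact (Int.le_of_dvd (hpos v hv w hw hne) hdvd).not_gt (hlt v hv w hw hne)
  calc S.card ≤ (Finset.univ : Finset (Option (ZMod p))).card :=
        Finset.card_le_card_of_injOn _ (fun _ _ => Finset.mem_coe.mpr (Finset.mem_univ _)) hinj
    _ = p + 1 := by simp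

theorem at_most_twelve_slopes_pairwise_dist_le_five
    (S : Finset (ℤ × ℤ))
    (hprim : ∀ v ∈ S, Primitive v)
    (hdistinct : ∀ v ∈ S, ∀ w ∈ S, v ≠ w → ¬ SameSlope v w)
    (hdist : ∀ v ∈ S, ∀ w ∈ S, v ≠ w → slopeDist v w ≤ 5) :
    S.card ≤ 12 := by
  have : Fact (Nat.Prime 7) := ⟨by norm_num⟩
  have h8 : S.card ≤ 7 + 1 := card_le_of_slopeDist_lt 7 S
    (fun v hv w hw hne => (hprim v hv).slopeDist_pos (hprim w hw) (hdistinct v hv w hw hne))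
    (fun v hv w hw hne => by have := hdist v hv w hw hne; push_cast; omega)
  omega
end
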